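/- arXiv:1501.00689 — 2 statements merged into one kernel-verified Lean document; each statement's English description precedes it below -/
import Mathlib

section
/- Let L be a limit operator on a set X, let D ⊆ X be an open subset of (X, τ_L) that is Hausdorff and locally compact in the subspace topology, and let L* be the modified limit operator with derived topology τ_{L*}. Assume τ_{L*} satisfies (A_Sep) with respect to (τ_L, D). If a sequence σ converges to a point q in the topology τ_{L*} and q ∈ L(σ), then q ∈ L*(σ). -/
open Set Filter Topology

universe u

/-- A limit operator on `X`: a map from sequences to sets of "limits",
compatible with subsequences. -/
def IsLimitOp {X : Type u} (L : (ℕ → X) → Set X) : Prop :=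
  ∀ (σ : ℕ → X) (φ : ℕ → ℕ), StrictMono φ → L σ ⊆ L (σ ∘ φ)

/-- `C` is sequentially closed with respect to the limit operator `L`. -/
def SeqClosedFor {X : Type u} (L : (ℕ → X) → Set X) (C : Set X) : Prop :=
  ∀ σ : ℕ → X, (∀ n, σ n ∈ C) → L σ ⊆ C

/-- The topology derived from a limit operator `L`: its closed sets are exactly
the sets `C` such that `L σ ⊆ C` for every sequence `σ` with values in `C`. -/
def derivedTop {X : Type u} (L : (ℕ → X) → Set X) (hL : IsLimitOp L) :
    TopologicalSpace X :=
  TopologicalSpace.ofClosed {C | SeqClosedFor L C}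
    (fun σ h => absurd (h 0) (Set.notMem_empty _))
    (fun A hA σ hσ p hp => by
      rw [Set.mem_sInter]
      intro C hC
      exact hA hC σ (fun n => Set.mem_sInter.mp (hσ n) C hC) hp)
    (by
      intro C hC B hB σ hσ p hp
      by_cases hinf : {n | σ n ∈ C}.Infinite
      · exact Or.inl (hC _ (fun n => Nat.nth_mem_of_infinite hinf n)
          (hL σ _ (Nat.nth_strictMono hinf) hp))
      · have hfin : {n | σ n ∈ C}.Finite := Set.not_infinite.mp hinf
        have hBinf : {n | σ n ∈ B}.Infinite :=
          Set.Infinite.mono (fun n hn => (hσ n).resolve_left hn) hfin.infinite_compl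
        exact Or.inr (hB _ (fun n => Nat.nth_mem_of_infinite hBinf n)
          (hL σ _ (Nat.nth_strictMono hBinf) hp)))

/-- The limit operator associated to a topology `t`: it assigns to each sequence
the set of all its limits in `t`. -/
def assocLimOp {X : Type u} (t : TopologicalSpace X) : (ℕ → X) → Set X :=
  fun σ => {p | Filter.Tendsto σ Filter.atTop (@nhds X t p)}

theorem assocLimOp_isLimitOp {X : Type u} (t : TopologicalSpace X) :
    IsLimitOp (assocLimOp t) :=
  fun _σ _φ hφ _p hp => hp.comp hφ.tendsto_atTop

/-- `τ_Seq`: the topology derived from the limit operator associated to `t`. -/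
def seqModTop {X : Type u} (t : TopologicalSpace X) : TopologicalSpace X :=
  derivedTop (assocLimOp t) (assocLimOp_isLimitOp t)

/-- `L` is of first order on `D`. -/
def IsFirstOrderOpOn {X : Type u} (L : (ℕ → X) → Set X) (hL : IsLimitOp L)
    (D : Set X) : Prop :=
  ∀ σ : ℕ → X, (∀ n, σ n ∈ D) → ∀ p ∈ D,
    (p ∈ L σ ↔ Filter.Tendsto σ Filter.atTop (@nhds X (derivedTop L hL) p))

/-- `L` is of first order. -/
def IsFirstOrderOp {X : Type u} (L : (ℕ → X) → Set X) (hL : IsLimitOp L) : Prop :=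
  ∀ (σ : ℕ → X) (p : X),
    p ∈ L σ ↔ Filter.Tendsto σ Filter.atTop (@nhds X (derivedTop L hL) p)

/-- A limit operator is coherent if every constant sequence has its value as a limit. -/
def CoherentOp {X : Type u} (L : (ℕ → X) → Set X) : Prop :=
  ∀ x : X, x ∈ L (fun _ => x)

/-- The transfinite iterates of a limit operator: `L^1 σ = L σ` and, for `i ≠ 1`,
`L^i σ = {p | p ∈ L ρ for some sequence ρ with values in ⋃_{j<i} L^j σ}`. -/
noncomputable def iterOp {X : Type u} (L : (ℕ → X) → Set X) (σ : ℕ → X)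
    (i : Ordinal.{0}) : Set X :=
  if i = 1 then L σ
  else {p | ∃ ρ : ℕ → X,
    (∀ n, ∃ j : Ordinal.{0}, ∃ _hj : j < i, ρ n ∈ iterOp L σ j) ∧ p ∈ L ρ}
termination_by i

open Classical in
/-- The modified limit operator `L*` relative to a subset `D`. -/
noncomputable def modOp {X : Type u} (L : (ℕ → X) → Set X) (D : Set X) :
    (ℕ → X) → Set X := fun σ =>
  if ∃ φ : ℕ → ℕ, StrictMono φ ∧ ∃ p ∈ D, p ∈ L (σ ∘ φ) then L σ ∩ D else L σ

/-- The `D`-separating topology `τ*`: generated by the subbasis consisting of the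
`t`-open sets together with the complements of compact subsets of `D`. -/
def sepTop {X : Type u} (t : TopologicalSpace X) (D : Set X) : TopologicalSpace X :=
  TopologicalSpace.generateFrom
    ({U : Set X | @IsOpen X t U} ∪ {V : Set X | ∃ K, K ⊆ D ∧ @IsCompact X t K ∧ V = Kᶜ})

/-- Condition (A_Fin): `t'` refines `t`. -/
def AFin {X : Type u} (t t' : TopologicalSpace X) : Prop :=
  ∀ U : Set X, @IsOpen X t U → @IsOpen X t' U

/-- Condition (A_Sep): every `p ∈ D` and `q ∉ D` are separated by a `t`-open set
and a `t'`-open set. -/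
def ASep {X : Type u} (t t' : TopologicalSpace X) (D : Set X) : Prop :=
  ∀ p ∈ D, ∀ q ∈ (Dᶜ : Set X), ∃ U V : Set X,
    @IsOpen X t U ∧ @IsOpen X t' V ∧ p ∈ U ∧ q ∈ V ∧ U ∩ V = ∅

/-- The restriction of a limit operator `L` to a subset `D`, as an operator on `↥D`:
`L|_D(σ) = L(σ) ∩ D`. -/
def restrictOp {X : Type u} (L : (ℕ → X) → Set X) (D : Set X) :
    (ℕ → D) → Set D :=
  fun σ => {d : D | (d : X) ∈ L (fun n => (σ n : X))}

theorem isClosed_derivedTop_iff {X : Type u} {L : (ℕ → X) → Set X} (hL : IsLimitOp L)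
    {C : Set X} : IsClosed[derivedTop L hL] C ↔ SeqClosedFor L C := by
  rw [← @isOpen_compl_iff X C (derivedTop L hL)]
  change SeqClosedFor L Cᶜᶜ ↔ _
  rw [compl_compl]

theorem IsLimitOp.subset_of_eventually_mem {X : Type u} {L : (ℕ → X) → Set X}
    (hL : IsLimitOp L) {C : Set X} (hC : IsClosed[derivedTop L hL] C) {σ : ℕ → X}
    (hσ : ∀ᶠ n in atTop, σ n ∈ C) : L σ ⊆ C := by
  obtain ⟨N, hN⟩ := eventually_atTop.mp hσ
  have hshift : StrictMono (fun n => n + N) := fun _ _ h => Nat.add_lt_add_right h N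
  exact (hL σ _ hshift).trans ((isClosed_derivedTop_iff hL).mp hC (σ ∘ fun n => n + N)
    fun n => hN _ (Nat.le_add_left N n))

/-- If `q ∉ D`, (A_Sep) gives disjoint `U ∋ p` (`τ_L`-open) and `V ∋ q` (`t'`-open); the
subsequence is eventually in `V`, hence in the `τ_L`-closed set `Uᶜ`, which must then contain
its `L`-limit `p`. -/
theorem mem_of_tendsto_of_mem_limitOp_subseq {X : Type u} {L : (ℕ → X) → Set X}
    (hL : IsLimitOp L) {D : Set X} {t' : TopologicalSpace X}
    (hsep : ASep (derivedTop L hL) t' D) {σ : ℕ → X} {q : X}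
    (hσ : Tendsto σ atTop (@nhds X t' q)) {φ : ℕ → ℕ} (hφ : StrictMono φ) {p : X}
    (hpD : p ∈ D) (hp : p ∈ L (σ ∘ φ)) : q ∈ D := by
  by_contra hqD
  obtain ⟨U, V, hU, hV, hpU, hqV, hUV⟩ := hsep p hpD q hqD
  have hσφV : ∀ᶠ n in atTop, (σ ∘ φ) n ∈ V :=
    (hσ.comp hφ.tendsto_atTop) (@IsOpen.mem_nhds X t' _ _ hV hqV)
  have hσφU : ∀ᶠ n in atTop, (σ ∘ φ) n ∈ Uᶜ :=
    hσφV.mono fun _ hn hnU => (eq_empty_iff_forall_notMem.mp hUV) _ ⟨hnU, hn⟩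
  have hUc : IsClosed[derivedTop L hL] Uᶜ := @IsOpen.isClosed_compl X (derivedTop L hL) U hU
  exact hL.subset_of_eventually_mem hUc hσφU hp hpU

theorem stmt_14_general {X : Type u} (L : (ℕ → X) → Set X) (hL : IsLimitOp L)
    (D : Set X)
    (hM : IsLimitOp (modOp L D))
    (hsep : ASep (derivedTop L hL) (derivedTop (modOp L D) hM) D) :
    ∀ (σ : ℕ → X) (q : X),
      Filter.Tendsto σ Filter.atTop (@nhds X (derivedTop (modOp L D) hM) q) →
      q ∈ L σ → q ∈ modOp L D σ := by
  intro σ q hconv hq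
  unfold modOp
  split_ifs with hsub
  · obtain ⟨φ, hφ, p, hpD, hp⟩ := hsub
    exact ⟨hq, mem_of_tendsto_of_mem_limitOp_subseq hL hsep hconv hφ hpD hp⟩
  · exact hq

theorem stmt_14 {X : Type u} (L : (ℕ → X) → Set X) (hL : IsLimitOp L)
    (D : Set X) (hD : @IsOpen X (derivedTop L hL) D)
    (hT2 : @T2Space D (TopologicalSpace.induced (Subtype.val : D → X) (derivedTop L hL)))
    (hLC : @LocallyCompactSpace D (TopologicalSpace.induced (Subtype.val : D → X) (derivedTop L hL)))
    (hM : IsLimitOp (modOp L D))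
    (hsep : ASep (derivedTop L hL) (derivedTop (modOp L D) hM) D) :
    ∀ (σ : ℕ → X) (q : X),
      Filter.Tendsto σ Filter.atTop (@nhds X (derivedTop (modOp L D) hM) q) →
      q ∈ L σ → q ∈ modOp L D σ :=
  stmt_14_general L hL D hM hsep
end

section
/- Let L be a limit operator on a set X with derived topology τ := τ_L, and let D ⊆ X be an open subset that is Hausdorff and locally compact in the subspace topology. Assume L is of first order on D. Then the following chain of inclusions of topologies holds: τ ⊆ τ* ⊆ (τ*)_Seq ⊆ τ_{L*}, where τ* is the topology generated by the subbasis τ ∪ {X \ K : K a compact subset of D}, (τ*)_Seq is the topology derived from the associated limit operator L_{τ*}, and τ_{L*} is the topology derived from the modified limit operator L*. -/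
open Set Filter Topology

universe u

/-!
The derived topology `τ` of a limit operator is sequential, because every `L`-limit is a
`τ`-limit. A compact `K ⊆ D` is closed in the Hausdorff open set `D`, hence locally closed in
`X`, hence a compact sequential space, hence sequentially compact. Now let `p ∈ L* σ`. If some
subsequence of `σ` has an `L`-limit in `D`, then `p ∈ D \ K` for every compact `K ⊆ D` that
misses `p`, and `D \ K` is `τ`-open, so `σ` converges to `p` in `τ*`. Otherwise `σ` is eventually
outside every compact `K ⊆ D`: a subsequence inside `K` would have a further subsequence
`τ`-converging in `D`, i.e. `L`-converging there since `L` is of first order on `D`. So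
`L* σ ⊆ L_{τ*} σ` for every `σ`, which gives `(τ*)_Seq ⊆ τ_{L*}`.
-/

section Topology

variable {X : Type*} [TopologicalSpace X]

theorem IsLocallyClosed.sequentialSpace [SequentialSpace X] {s : Set X}
    (hs : IsLocallyClosed s) : SequentialSpace s := by
  obtain ⟨U, Z, hU, hZ, rfl⟩ := hs
  refine ⟨fun A hA => ?_⟩
  suffices hB : IsClosed (Subtype.val '' A ∪ Uᶜ) by
    convert hB.preimage continuous_subtype_val
    ext y
    simpa using fun h => absurd y.2.1 h
  refine IsSeqClosed.isClosed fun {y x} hy hyx => ?_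
  by_cases hxU : x ∈ U
  · obtain ⟨N, hN⟩ := eventually_atTop.1 (hyx.eventually (hU.mem_nhds hxU))
    have hyN : Tendsto (fun n => y (n + N)) atTop (𝓝 x) := (tendsto_add_atTop_iff_nat N).2 hyx
    choose z hzA hz using fun n => (hy (n + N)).resolve_right (not_not.2 (hN _ (by omega)))
    have hxZ : x ∈ Z :=
      hZ.mem_of_tendsto hyN (.of_forall fun n => hz n ▸ (z n).2.2)
    refine Or.inl ⟨⟨x, hxU, hxZ⟩, hA hzA ?_, rfl⟩
    rw [tendsto_subtype_rng]
    simpa only [hz] using hyN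
  · exact Or.inr hxU

variable {D K : Set X}

theorem IsCompact.isOpen_diff_of_subset (hD : IsOpen D) [T2Space D] (hK : IsCompact K)
    (hKD : K ⊆ D) : IsOpen (D \ K) := by
  have hK' : IsCompact (Subtype.val ⁻¹' K : Set D) := by
    rwa [Topology.IsEmbedding.subtypeVal.isCompact_iff, image_preimage_eq_inter_range,
      Subtype.range_coe, inter_eq_self_of_subset_left hKD]
  convert hD.isOpenMap_subtype_val _ hK'.isClosed.isOpen_compl using 1
  ext x
  simp

theorem IsCompact.isSeqCompact_of_subset [SequentialSpace X] (hD : IsOpen D) [T2Space D]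
    (hK : IsCompact K) (hKD : K ⊆ D) : IsSeqCompact K := by
  have hKlc : IsLocallyClosed K := by
    refine ⟨D, (D \ K)ᶜ, hD, (hK.isOpen_diff_of_subset hD hKD).isClosed_compl, ?_⟩
    rw [sdiff_eq, compl_inter, compl_compl, inter_union_distrib_left, inter_compl_self,
      empty_union, inter_eq_self_of_subset_right hKD]
  have := hKlc.sequentialSpace
  have := isCompact_iff_compactSpace.1 hK
  have : CountablyCompactSpace K :=
    isCountablyCompact_iff_countablyCompactSpace.1 hK.isCountablyCompact
  simpa using Subtype.isSeqCompact_iff.1 ((seqCompactSpace_iff K).1 inferInstance)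

end Topology

section LimitOperators

variable {X : Type u}

theorem isOpen_derivedTop_iff {L : (ℕ → X) → Set X} {hL : IsLimitOp L} {U : Set X} :
    @IsOpen X (derivedTop L hL) U ↔ SeqClosedFor L Uᶜ := Iff.rfl

theorem tendsto_derivedTop_of_mem {L : (ℕ → X) → Set X} (hL : IsLimitOp L) {σ : ℕ → X} {p : X}
    (hp : p ∈ L σ) : Tendsto σ atTop (@nhds X (derivedTop L hL) p) := by
  let _ := derivedTop L hL
  refine tendsto_nhds.2 fun U hU hpU => ?_
  by_contra hev
  obtain ⟨φ, hφ, hφU⟩ := extraction_of_frequently_atTop (not_eventually.1 hev)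
  exact isOpen_derivedTop_iff.1 hU (σ ∘ φ) hφU (hL σ φ hφ hp) hpU

theorem sequentialSpace_derivedTop {L : (ℕ → X) → Set X} (hL : IsLimitOp L) :
    @SequentialSpace X (derivedTop L hL) :=
  let _ := derivedTop L hL
  ⟨fun C hC => by
    rw [← isOpen_compl_iff, isOpen_derivedTop_iff, compl_compl]
    exact fun σ hσ _ hp => hC hσ (tendsto_derivedTop_of_mem hL hp)⟩

theorem aFin_derivedTop_of_subset {L₁ L₂ : (ℕ → X) → Set X} (h₁ : IsLimitOp L₁)
    (h₂ : IsLimitOp L₂) (h : ∀ σ, L₂ σ ⊆ L₁ σ) :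
    AFin (derivedTop L₁ h₁) (derivedTop L₂ h₂) :=
  fun _ hU σ hσ _ hp => isOpen_derivedTop_iff.1 hU σ hσ (h σ hp)

theorem aFin_seqModTop (t : TopologicalSpace X) : AFin t (seqModTop t) :=
  fun U hU σ hσ p hp hpU => by
    obtain ⟨n, hn⟩ := (hp.eventually_mem (@IsOpen.mem_nhds X t _ _ hU hpU)).exists
    exact hσ n hn

theorem aFin_sepTop (t : TopologicalSpace X) (D : Set X) : AFin t (sepTop t D) :=
  fun U hU => TopologicalSpace.GenerateOpen.basic U (Or.inl hU)

theorem tendsto_sepTop_of_tendsto {t : TopologicalSpace X} {D : Set X} {σ : ℕ → X} {p : X}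
    (ht : Tendsto σ atTop (@nhds X t p))
    (hK : ∀ K ⊆ D, @IsCompact X t K → p ∉ K → ∀ᶠ n in atTop, σ n ∉ K) :
    Tendsto σ atTop (@nhds X (sepTop t D) p) := by
  rw [sepTop, TopologicalSpace.nhds_generateFrom]
  refine tendsto_iInf.2 fun s => tendsto_iInf.2 fun ⟨hps, hs⟩ => tendsto_principal.2 ?_
  rcases hs with hs | ⟨K, hKD, hKc, rfl⟩
  · exact (@tendsto_nhds _ t _ _ _ _).1 ht s hs hps
  · exact hK K hKD hKc hps

theorem tendsto_sepTop_of_mem_modOp {L : (ℕ → X) → Set X} (hL : IsLimitOp L)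
    {D : Set X} (hD : @IsOpen X (derivedTop L hL) D)
    (hT2 : @T2Space D (TopologicalSpace.induced (Subtype.val : D → X) (derivedTop L hL)))
    (hfoD : IsFirstOrderOpOn L hL D) {σ : ℕ → X} {p : X} (hp : p ∈ modOp L D σ) :
    Tendsto σ atTop (@nhds X (sepTop (derivedTop L hL) D) p) := by
  let _ := derivedTop L hL
  unfold modOp at hp
  split_ifs at hp with hsub
  · refine tendsto_sepTop_of_tendsto (tendsto_derivedTop_of_mem hL hp.1) fun K hKD hKc hpK => ?_
    have hDK : IsOpen (D \ K) := hKc.isOpen_diff_of_subset hD hKD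
    exact ((tendsto_derivedTop_of_mem hL hp.1).eventually (hDK.mem_nhds ⟨hp.2, hpK⟩)).mono
      fun n hn => hn.2
  · refine tendsto_sepTop_of_tendsto (tendsto_derivedTop_of_mem hL hp) fun K hKD hKc _ => ?_
    by_contra hfreq
    obtain ⟨φ, hφ, hφK⟩ := extraction_of_frequently_atTop (not_eventually.1 hfreq)
    have := sequentialSpace_derivedTop hL
    obtain ⟨q, hqK, ψ, hψ, hq⟩ := hKc.isSeqCompact_of_subset hD hKD fun n => not_not.1 (hφK n)
    have hqL : q ∈ L (σ ∘ (φ ∘ ψ)) :=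
      (hfoD _ (fun n => hKD (not_not.1 (hφK (ψ n)))) q (hKD hqK)).2 hq
    exact hsub ⟨φ ∘ ψ, hφ.comp hψ, q, hKD hqK, hqL⟩

end LimitOperators

theorem stmt_15_general {X : Type u} (L : (ℕ → X) → Set X) (hL : IsLimitOp L)
    (D : Set X) (hD : @IsOpen X (derivedTop L hL) D)
    (hT2 : @T2Space D (TopologicalSpace.induced (Subtype.val : D → X) (derivedTop L hL)))
    (hfoD : IsFirstOrderOpOn L hL D)
    (hM : IsLimitOp (modOp L D)) :
    AFin (derivedTop L hL) (sepTop (derivedTop L hL) D) ∧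
    AFin (sepTop (derivedTop L hL) D) (seqModTop (sepTop (derivedTop L hL) D)) ∧
    AFin (seqModTop (sepTop (derivedTop L hL) D)) (derivedTop (modOp L D) hM) :=
  ⟨aFin_sepTop _ D, aFin_seqModTop _,
    aFin_derivedTop_of_subset _ hM fun _ _ => tendsto_sepTop_of_mem_modOp hL hD hT2 hfoD⟩

theorem stmt_15 {X : Type u} (L : (ℕ → X) → Set X) (hL : IsLimitOp L)
    (D : Set X) (hD : @IsOpen X (derivedTop L hL) D)
    (hT2 : @T2Space D (TopologicalSpace.induced (Subtype.val : D → X) (derivedTop L hL)))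
    (hLC : @LocallyCompactSpace D (TopologicalSpace.induced (Subtype.val : D → X) (derivedTop L hL)))
    (hfoD : IsFirstOrderOpOn L hL D)
    (hM : IsLimitOp (modOp L D)) :
    AFin (derivedTop L hL) (sepTop (derivedTop L hL) D) ∧
    AFin (sepTop (derivedTop L hL) D) (seqModTop (sepTop (derivedTop L hL) D)) ∧
    AFin (seqModTop (sepTop (derivedTop L hL) D)) (derivedTop (modOp L D) hM) :=
  stmt_15_general L hL D hD hT2 hfoD hM
end
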